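/- arXiv:1205.5512 — 2 statements merged into one kernel-verified Lean document; each statement's English description precedes it below -/
import Mathlib

section
/- For complex z with |z| < 1, log((1 - e^{-z})/z) = -z/2 + Σ_{n≥1} B_{2n}/((2n)·(2n)!) · z^{2n}, where log is the branch vanishing at z = 0. -/
open Complex Real Finset

namespace LogAux

noncomputable def bc (k : ℕ) : ℂ := (bernoulli k : ℂ) / (k.factorial : ℂ)

lemma bc_norm (k : ℕ) : ‖bc k‖ ≤ 4 * (1/4 : ℝ) ^ k := by
  have hnorm : ‖bc k‖ = |((bernoulli k : ℚ) : ℝ)| / (k.factorial : ℝ) := by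
    rw [bc, norm_div, Complex.norm_ratCast]
    norm_num
  match k with
  | 0 => rw [hnorm]; norm_num
  | 1 => rw [hnorm, bernoulli_one]
         rw [show |((-1/2 : ℚ) : ℝ)| = 1/2 by rw [abs_eq (by norm_num : (0:ℝ) ≤ 1/2)]; norm_num]
         norm_num
  | (k+2) =>
    rcases Nat.even_or_odd (k+2) with he | ho
    · obtain ⟨m, hm⟩ := he
      have hm' : k + 2 = 2 * m := by omega
      have hm0 : m ≠ 0 := by omega
      have hs := hasSum_zeta_nat hm0
      have hE0 : 0 ≤ (-1 : ℝ) ^ (m + 1) * (2 : ℝ) ^ (2 * m - 1) * π ^ (2 * m) *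
          bernoulli (2 * m) / ((2*m).factorial : ℝ) := hs.nonneg fun n => by positivity
      have hE2 : (-1 : ℝ) ^ (m + 1) * (2 : ℝ) ^ (2 * m - 1) * π ^ (2 * m) *
          bernoulli (2 * m) / ((2*m).factorial : ℝ) ≤ π ^ 2 / 6 := by
        refine hasSum_le (fun n => ?_) hs hasSum_zeta_two
        rcases Nat.eq_zero_or_pos n with h0 | h0
        · subst h0; simp [zero_pow, hm0]
        · have h1 : (1:ℝ) ≤ (n:ℝ) := by exact_mod_cast h0
          have : (n:ℝ) ^ 2 ≤ (n:ℝ) ^ (2*m) := by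
            apply pow_le_pow_right₀ h1; omega
          apply one_div_le_one_div_of_le (by positivity) this
      set B : ℝ := ((bernoulli (2*m) : ℚ) : ℝ) with hBdef
      set E : ℝ := (-1 : ℝ) ^ (m + 1) * (2 : ℝ) ^ (2 * m - 1) * π ^ (2 * m) *
          B / ((2*m).factorial : ℝ) with hEdef
      set P : ℝ := (2:ℝ) ^ (2*m-1) * π ^ (2*m) with hPdef
      have hPpos : 0 < P := by positivity
      have hfac : (0:ℝ) < ((2*m).factorial : ℝ) := by exact_mod_cast Nat.factorial_pos _
      have habs : |E| = P * |B| / ((2*m).factorial : ℝ) := by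
        rw [hEdef, hPdef, abs_div, abs_mul, abs_mul, abs_mul, _root_.abs_pow, _root_.abs_pow, _root_.abs_pow,
          abs_neg, abs_one, one_pow, one_mul, _root_.abs_of_pos Real.pi_pos,
          _root_.abs_of_pos (by norm_num : (0:ℝ) < 2), Nat.abs_cast]
      have hE2' : E ≤ 2 := by
        have h := Real.pi_lt_d2.le
        nlinarith [Real.pi_pos]
      have key : P * |B| ≤ 2 * ((2*m).factorial : ℝ) := by
        have : P * |B| / ((2*m).factorial : ℝ) ≤ 2 := by
          rw [← habs, _root_.abs_of_nonneg hE0]; exact hE2'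
        rw [div_le_iff₀ hfac] at this; linarith
      have hpow : (4:ℝ) ^ (2*m) ≤ 2 * P := by
        have h1 : (2:ℝ) * (2:ℝ) ^ (2*m-1) = (2:ℝ) ^ (2*m) := by
          rw [← pow_succ']; congr 1; omega
        have h2 : (4:ℝ) ^ (2*m) ≤ (2*π) ^ (2*m) := by
          apply pow_le_pow_left₀ (by norm_num)
          nlinarith [Real.pi_gt_three]
        calc (4:ℝ) ^ (2*m) ≤ (2*π) ^ (2*m) := h2
          _ = (2:ℝ)^(2*m) * π ^ (2*m) := by rw [mul_pow]
          _ = 2 * P := by rw [hPdef, ← h1]; ring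
      rw [hnorm, hm', ← hBdef]
      have h40 : (0:ℝ) < (4:ℝ)^(2*m) := by positivity
      have h1 : |B| / ((2*m).factorial : ℝ) ≤ 2 / P := by
        rw [div_le_div_iff₀ hfac hPpos]; nlinarith
      have h2 : 2 / P ≤ 4 * (1/4:ℝ)^(2*m) := by
        rw [div_le_iff₀ hPpos, show (4:ℝ)*(1/4:ℝ)^(2*m) = 4 / 4^(2*m) by
          rw [one_div, inv_pow, div_eq_mul_inv], div_mul_eq_mul_div, le_div_iff₀ h40]
        nlinarith
      linarith
    · have hb0 : bernoulli (k+2) = 0 := by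
        rw [bernoulli_eq_bernoulli'_of_ne_one (by omega)]
        exact bernoulli'_eq_zero_of_odd ho (by omega)
      rw [hnorm, hb0]
      simp only [Rat.cast_zero, abs_zero, zero_div]
      positivity

end LogAux

namespace LogAux

noncomputable def Fa (k : ℕ) : ℂ := (-1) ^ k / ((k+1).factorial : ℂ)
noncomputable def FF (w : ℂ) : ℂ := ∑' k : ℕ, Fa k * w ^ k
noncomputable def FD (w : ℂ) : ℂ := ∑' k : ℕ, Fa k * ((k:ℂ) * w ^ (k-1))
noncomputable def BB (w : ℂ) : ℂ := ∑' k : ℕ, bc k * w ^ k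
noncomputable def GG (w : ℂ) : ℂ := ∑' n : ℕ, bc (2*n+2) / ((2*n+2 : ℕ) : ℂ) * w ^ (2*n+2)
noncomputable def HH (w : ℂ) : ℂ := ∑' n : ℕ, bc (2*n+2) * w ^ (2*n+1)

lemma two_pow_le_factorial (k : ℕ) : 2 ^ k ≤ (k+1).factorial := by
  induction k with
  | zero => norm_num
  | succ k ih =>
    rw [pow_succ, Nat.factorial_succ]
    calc 2 ^ k * 2 ≤ (k+1).factorial * 2 := by omega
    _ ≤ (k + 1 + 1) * (k+1).factorial := by nlinarith [Nat.factorial_pos (k+1)]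

lemma Fa_norm (k : ℕ) : ‖Fa k‖ = 1 / (((k+1).factorial : ℝ)) := by
  rw [Fa, norm_div, norm_pow, norm_neg, norm_one, one_pow]
  norm_num

lemma Fa_norm_le (k : ℕ) : ‖Fa k‖ ≤ (1/2 : ℝ) ^ k := by
  rw [Fa_norm]
  rw [div_pow, one_pow, div_le_div_iff₀ (by positivity) (by positivity)]
  have := two_pow_le_factorial k
  calc (1:ℝ) * 2 ^ k = 2 ^ k := by ring
    _ ≤ ((k+1).factorial : ℝ) := by exact_mod_cast this
    _ = ((k+1).factorial : ℝ) * 1 := by ring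
    _ ≤ 1 * ((k+1).factorial : ℝ) := by ring_nf; rfl

lemma summable_F {w : ℂ} (hw : ‖w‖ ≤ 1) : Summable fun k => ‖Fa k * w ^ k‖ := by
  refine Summable.of_nonneg_of_le (fun k => norm_nonneg _) (fun k => ?_)
    (summable_geometric_of_lt_one (by norm_num) (by norm_num : (1/2:ℝ) < 1))
  rw [norm_mul, norm_pow]
  calc ‖Fa k‖ * ‖w‖ ^ k ≤ (1/2:ℝ)^k * 1 := by
        apply mul_le_mul (Fa_norm_le k) (pow_le_one₀ (norm_nonneg _) hw)
          (by positivity) (by positivity)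
    _ = (1/2:ℝ)^k := by ring

lemma hasSum_F {w : ℂ} (hw : ‖w‖ ≤ 1) : HasSum (fun k => Fa k * w ^ k) (FF w) :=
  ((summable_F hw).of_norm).hasSum

lemma summable_FD {w : ℂ} (hw : ‖w‖ ≤ 1) :
    Summable fun k => ‖Fa k * ((k:ℂ) * w ^ (k-1))‖ := by
  refine Summable.of_nonneg_of_le (fun k => norm_nonneg _) (fun k => ?_)
    (Real.summable_pow_div_factorial 1 |>.congr fun k => by rw [one_pow])
  rw [norm_mul, norm_mul, norm_pow, Fa_norm, Complex.norm_natCast]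
  have h1 : ‖w‖ ^ (k-1) ≤ 1 := pow_le_one₀ (norm_nonneg _) hw
  have h2 : (1 / ((k+1).factorial : ℝ)) * (k:ℝ) ≤ 1 / (k.factorial : ℝ) := by
    rw [div_mul_eq_mul_div, div_le_div_iff₀ (by positivity) (by positivity)]
    have : (k+1).factorial = (k+1) * k.factorial := Nat.factorial_succ k
    rw [this]
    push_cast
    nlinarith [Nat.factorial_pos k, (by exact_mod_cast Nat.factorial_pos k : (0:ℝ) < k.factorial)]
  calc 1 / ((k+1).factorial : ℝ) * ((k:ℝ) * ‖w‖^(k-1))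
      = 1 / ((k+1).factorial : ℝ) * (k:ℝ) * ‖w‖^(k-1) := by ring
    _
      ≤ 1 / ((k+1).factorial : ℝ) * (k:ℝ) * 1 := by
        apply mul_le_mul_of_nonneg_left h1 (by positivity)
    _ = 1 / ((k+1).factorial : ℝ) * (k:ℝ) := by ring
    _ ≤ 1 / (k.factorial : ℝ) := h2

lemma hasSum_FD {w : ℂ} (hw : ‖w‖ ≤ 1) :
    HasSum (fun k => Fa k * ((k:ℂ) * w ^ (k-1))) (FD w) :=
  ((summable_FD hw).of_norm).hasSum

lemma hasSum_exp (x : ℂ) : HasSum (fun k => x ^ k / (k.factorial : ℂ)) (Complex.exp x) := by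
  rw [Complex.exp_eq_exp_ℂ]
  exact NormedSpace.expSeries_div_hasSum_exp x

lemma mulF {w : ℂ} (hw : ‖w‖ ≤ 1) : w * FF w = 1 - Complex.exp (-w) := by
  have hexp := (hasSum_exp (-w)).neg
  have h1 : HasSum (fun k => -((-w) ^ (k+1) / ((k+1).factorial : ℂ)))
      (1 - Complex.exp (-w)) := by
    have h2 := (hasSum_nat_add_iff' (f := fun k => -((-w) ^ k / (k.factorial : ℂ))) 1).mpr hexp
    have : -Complex.exp (-w) + 1 = 1 - Complex.exp (-w) := by ring
    simpa [this] using h2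
  have h3 : HasSum (fun k => w * (Fa k * w ^ k)) (w * FF w) := (hasSum_F hw).mul_left w
  have funeq : (fun k : ℕ => w * (Fa k * w ^ k))
      = fun k => -((-w) ^ (k+1) / ((k+1).factorial : ℂ)) := by
    funext k
    rw [Fa, neg_pow w]
    ring
  rw [funeq] at h3
  exact h3.unique h1

lemma keyF {w : ℂ} (hw : ‖w‖ ≤ 1) : w * FD w + FF w = Complex.exp (-w) := by
  have h1 : HasSum (fun k => w * (Fa k * ((k:ℂ) * w ^ (k-1))) + Fa k * w ^ k)
      (w * FD w + FF w) := ((hasSum_FD hw).mul_left w).add (hasSum_F hw)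
  have funeq : (fun k : ℕ => w * (Fa k * ((k:ℂ) * w ^ (k-1))) + Fa k * w ^ k)
      = fun k => (-w) ^ k / (k.factorial : ℂ) := by
    funext k
    rw [Fa, neg_pow w]
    match k with
    | 0 => simp
    | (k+1) =>
      have hfac : ((k+1+1).factorial : ℂ) = ((k+1+1) : ℂ) * ((k+1).factorial : ℂ) := by
        exact_mod_cast congrArg (Nat.cast (R := ℂ)) (Nat.factorial_succ (k+1))
      have hne : ((k+1).factorial : ℂ) ≠ 0 := by exact_mod_cast Nat.factorial_ne_zero (k+1)
      have hne2 : ((k+1+1).factorial : ℂ) ≠ 0 := by exact_mod_cast Nat.factorial_ne_zero (k+2)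
      rw [show (k+1) - 1 = k from rfl]
      field_simp
      rw [hfac]
      push_cast
      ring
  rw [funeq] at h1
  exact h1.unique (hasSum_exp (-w))

lemma F_sub_one {w : ℂ} (hw : ‖w‖ ≤ 1) : ‖FF w - 1‖ ≤ ‖w‖ := by
  have h := hasSum_F hw
  have h1 : HasSum (fun k => Fa (k+1) * w ^ (k+1)) (FF w - 1) := by
    have h2 := (hasSum_nat_add_iff' (f := fun k => Fa k * w ^ k) 1).mpr h
    simpa [Fa] using h2
  have hbound : ∀ k : ℕ, ‖Fa (k+1) * w ^ (k+1)‖ ≤ ‖w‖ * (1/2:ℝ)^(k+1) := by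
    intro k
    rw [norm_mul, norm_pow]
    have h3 : ‖w‖ ^ (k+1) ≤ ‖w‖ := by
      calc ‖w‖^(k+1) ≤ ‖w‖^1 := pow_le_pow_of_le_one (norm_nonneg _) hw (by omega)
        _ = ‖w‖ := pow_one _
    calc ‖Fa (k+1)‖ * ‖w‖^(k+1) ≤ (1/2:ℝ)^(k+1) * ‖w‖ :=
          mul_le_mul (Fa_norm_le (k+1)) h3 (by positivity) (by positivity)
      _ = ‖w‖ * (1/2:ℝ)^(k+1) := by ring
  have hsum : Summable fun k => ‖w‖ * (1/2:ℝ)^(k+1) := by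
    apply Summable.mul_left
    exact (summable_nat_add_iff 1).mpr
      (summable_geometric_of_lt_one (by norm_num) (by norm_num : (1/2:ℝ) < 1))
  calc ‖FF w - 1‖ ≤ ∑' k, ‖Fa (k+1) * w ^ (k+1)‖ := h1.tsum_eq ▸ norm_tsum_le_tsum_norm
        (Summable.of_nonneg_of_le (fun k => norm_nonneg _) hbound hsum)
    _ ≤ ∑' k : ℕ, ‖w‖ * (1/2:ℝ)^(k+1) := Summable.tsum_le_tsum hbound
        (Summable.of_nonneg_of_le (fun k => norm_nonneg _) hbound hsum) hsum
    _ = ‖w‖ * ∑' k : ℕ, (1/2:ℝ)^(k+1) := tsum_mul_left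
    _ ≤ ‖w‖ * 1 := by
        apply mul_le_mul_of_nonneg_left _ (norm_nonneg _)
        have : ∑' k : ℕ, (1/2:ℝ)^(k+1) = (∑' k : ℕ, (1/2:ℝ)^k) * (1/2) := by
          rw [← tsum_mul_right]
          exact tsum_congr fun k => pow_succ _ _
        rw [this, tsum_geometric_of_lt_one (by norm_num) (by norm_num)]
        norm_num
    _ = ‖w‖ := by ring

lemma F_slit {w : ℂ} (hw : ‖w‖ < 1) : FF w ∈ Complex.slitPlane := by
  have h := lt_of_le_of_lt (F_sub_one hw.le) hw
  have := Complex.mem_slitPlane_of_norm_lt_one h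
  simpa using this

lemma F_ne_zero {w : ℂ} (hw : ‖w‖ < 1) : FF w ≠ 0 :=
  Complex.slitPlane_ne_zero (F_slit hw)

lemma summable_bc {w : ℂ} (hw : ‖w‖ ≤ 1) : Summable fun k => ‖bc k * w ^ k‖ := by
  refine Summable.of_nonneg_of_le (fun k => norm_nonneg _) (fun k => ?_)
    ((summable_geometric_of_lt_one (by norm_num) (by norm_num : (1/4:ℝ) < 1)).mul_left 4)
  rw [norm_mul, norm_pow]
  calc ‖bc k‖ * ‖w‖ ^ k ≤ (4 * (1/4:ℝ)^k) * 1 :=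
        mul_le_mul (bc_norm k) (pow_le_one₀ (norm_nonneg _) hw) (by positivity) (by positivity)
    _ = 4 * (1/4:ℝ)^k := by ring

lemma hasSum_B {w : ℂ} (hw : ‖w‖ ≤ 1) : HasSum (fun k => bc k * w ^ k) (BB w) :=
  ((summable_bc hw).of_norm).hasSum

lemma coeff_sum (w : ℂ) (n : ℕ) :
    ∑ kl ∈ antidiagonal n, (bc kl.1 * w ^ kl.1) *
      (if kl.2 = 0 then 0 else w ^ kl.2 / (kl.2.factorial : ℂ)) =
    if n = 1 then w else 0 := by
  rw [Finset.Nat.sum_antidiagonal_eq_sum_range_succ_mk, Finset.sum_range_succ]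
  simp only [Nat.sub_self, if_pos rfl, mul_zero, add_zero]
  have hterm : ∀ k ∈ range n, (bc k * w ^ k) *
      (if n - k = 0 then 0 else w ^ (n-k) / ((n-k).factorial : ℂ)) =
      ((n.choose k : ℂ) * (bernoulli k : ℂ)) * w ^ n / (n.factorial : ℂ) := by
    intro k hk
    have hkn : k < n := mem_range.mp hk
    have hne : n - k ≠ 0 := by omega
    rw [if_neg hne, bc]
    have hpow : w ^ k * w ^ (n-k) = w ^ n := by
      rw [← pow_add]; congr 1; omega
    have hch : ((n.choose k : ℕ) : ℂ) * (k.factorial : ℂ) * (((n-k).factorial : ℕ) : ℂ)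
        = (n.factorial : ℂ) := by
      exact_mod_cast congrArg (Nat.cast (R := ℂ))
        (Nat.choose_mul_factorial_mul_factorial hkn.le)
    have h1 : (k.factorial : ℂ) ≠ 0 := by exact_mod_cast Nat.factorial_ne_zero k
    have h2 : (((n-k).factorial : ℕ) : ℂ) ≠ 0 := by exact_mod_cast Nat.factorial_ne_zero _
    have h3 : (n.factorial : ℂ) ≠ 0 := by exact_mod_cast Nat.factorial_ne_zero n
    field_simp
    rw [← hpow]
    ring_nf
    rw [← hch]
    ring
  rw [Finset.sum_congr rfl hterm, ← Finset.sum_div, ← Finset.sum_mul]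
  have hcast : (∑ k ∈ range n, (n.choose k : ℂ) * (bernoulli k : ℂ))
      = if n = 1 then 1 else 0 := by
    have h := sum_bernoulli n
    have h2 := congrArg (Rat.cast (K := ℂ)) h
    push_cast at h2
    rw [h2]
    split_ifs <;> norm_num
  rw [hcast]
  split_ifs with h
  · subst h; simp
  · simp

lemma key_mulB {w : ℂ} (hw : ‖w‖ ≤ 1) : BB w * (Complex.exp w - 1) = w := by
  set d : ℕ → ℂ := fun k => if k = 0 then 0 else w ^ k / (k.factorial : ℂ) with hd
  have hdsum : HasSum d (Complex.exp w - 1) := by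
    have h := (hasSum_exp w).update 0 0
    have hupd : Function.update (fun k => w ^ k / (k.factorial : ℂ)) 0 0 = d := by
      funext k
      rw [Function.update_apply, hd]
    rw [hupd] at h
    have he : (0:ℂ) - w ^ 0 / ((Nat.factorial 0 : ℕ) : ℂ) + Complex.exp w = Complex.exp w - 1 := by
      norm_num; ring
    rwa [he] at h
  have hnd : Summable fun k => ‖d k‖ := by
    refine Summable.of_nonneg_of_le (fun k => norm_nonneg _) (fun k => ?_)
      (Real.summable_pow_div_factorial 1 |>.congr fun k => by rw [one_pow])
    show ‖if k = 0 then (0:ℂ) else w ^ k / (k.factorial : ℂ)‖ ≤ 1 / (k.factorial : ℝ)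
    split_ifs with h
    · simp only [norm_zero]; positivity
    · rw [norm_div, norm_pow, Complex.norm_natCast]
      have hf : (0:ℝ) < (k.factorial : ℝ) := by exact_mod_cast Nat.factorial_pos k
      gcongr
      exact pow_le_one₀ (norm_nonneg _) hw
  have hnb := summable_bc hw
  calc BB w * (Complex.exp w - 1)
      = (∑' k, bc k * w ^ k) * (∑' k, d k) := by rw [hdsum.tsum_eq, BB]
    _ = ∑' n, ∑ kl ∈ antidiagonal n, (bc kl.1 * w ^ kl.1) * d kl.2 :=
        tsum_mul_tsum_eq_tsum_sum_antidiagonal_of_summable_norm hnb hnd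
    _ = ∑' n, if n = 1 then w else 0 := tsum_congr fun n => coeff_sum w n
    _ = w := tsum_ite_eq 1 (fun _ => w)

lemma summable_HH {w : ℂ} (hw : ‖w‖ ≤ 1) :
    Summable fun n => ‖bc (2*n+2) * w ^ (2*n+1)‖ := by
  refine Summable.of_nonneg_of_le (fun k => norm_nonneg _) (fun n => ?_)
    ((summable_geometric_of_lt_one (by norm_num) (by norm_num : (1/16:ℝ) < 1)).mul_left 4)
  rw [norm_mul, norm_pow]
  have h1 : ‖bc (2*n+2)‖ ≤ 4 * (1/4:ℝ)^(2*n+2) := bc_norm _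
  have h2 : (4:ℝ) * (1/4:ℝ)^(2*n+2) ≤ 4 * (1/16:ℝ)^n := by
    have : ((1:ℝ)/4)^(2*n+2) = (1/16:ℝ)^n * (1/16) := by
      rw [show 2*n+2 = 2*(n+1) by ring, pow_mul]
      norm_num
      rw [pow_succ]
    rw [this]
    nlinarith [pow_nonneg (by norm_num : (0:ℝ) ≤ 1/16) n]
  calc ‖bc (2*n+2)‖ * ‖w‖^(2*n+1) ≤ (4 * (1/4:ℝ)^(2*n+2)) * 1 :=
        mul_le_mul h1 (pow_le_one₀ (norm_nonneg _) hw) (by positivity) (by positivity)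
    _ = 4 * (1/4:ℝ)^(2*n+2) := by ring
    _ ≤ 4 * (1/16:ℝ)^n := h2

lemma hasSum_HH {w : ℂ} (hw : ‖w‖ ≤ 1) :
    HasSum (fun n => bc (2*n+2) * w ^ (2*n+1)) (HH w) :=
  ((summable_HH hw).of_norm).hasSum

lemma key_H {w : ℂ} (hw : ‖w‖ ≤ 1) : w * HH w = BB w - 1 + w/2 := by
  have hB := hasSum_B hw
  have h2 : HasSum (fun k => bc (k+2) * w ^ (k+2)) (BB w - (1 + bc 1 * w)) := by
    have h := (hasSum_nat_add_iff' (f := fun k => bc k * w ^ k) 2).mpr hB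
    have hr : ∑ i ∈ range 2, bc i * w ^ i = 1 + bc 1 * w := by
      rw [Finset.sum_range_succ, Finset.sum_range_one]
      rw [bc]
      norm_num
    rwa [hr] at h
  have h3 : HasSum (fun n => bc (2*n+2) * w ^ (2*n+2)) (BB w - (1 + bc 1 * w)) := by
    have hinj : Function.Injective (fun n : ℕ => 2*n) := fun a b h => by dsimp only at h; omega
    have hsupp : ∀ x ∉ Set.range (fun n : ℕ => 2*n),
        bc (x+2) * w ^ (x+2) = 0 := by
      intro x hx
      have hodd : Odd (x+2) := by
        rcases Nat.even_or_odd x with he | ho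
        · exfalso; obtain ⟨m, hm⟩ := he; exact hx ⟨m, by dsimp only; omega⟩
        · obtain ⟨m, hm⟩ := ho; exact ⟨m+1, by omega⟩
      have hb0 : bernoulli (x+2) = 0 := by
        rw [bernoulli_eq_bernoulli'_of_ne_one (by omega)]
        exact bernoulli'_eq_zero_of_odd hodd (by omega)
      rw [bc, hb0]
      simp
    have := (Function.Injective.hasSum_iff hinj ?_).mpr h2
    · exact this
    · exact hsupp
  have h4 : HasSum (fun n => w * (bc (2*n+2) * w ^ (2*n+1))) (w * HH w) :=
    (hasSum_HH hw).mul_left w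
  have funeq : (fun n : ℕ => w * (bc (2*n+2) * w ^ (2*n+1)))
      = fun n => bc (2*n+2) * w ^ (2*n+2) := by
    funext n
    rw [pow_succ]
    ring
  rw [funeq] at h4
  have := h4.unique h3
  rw [this, bc, bernoulli_one, Nat.factorial_one]
  push_cast
  ring

lemma hasDerivAt_FF {w : ℂ} (hw : ‖w‖ < 1) : HasDerivAt FF (FD w) w := by
  have h := hasDerivAt_tsum_of_isPreconnected
    (u := fun k : ℕ => 1 / (k.factorial : ℝ))
    (g := fun k y => Fa k * y ^ k)
    (g' := fun k y => Fa k * ((k:ℂ) * y ^ (k-1)))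
    (Real.summable_pow_div_factorial 1 |>.congr fun k => by rw [one_pow])
    Metric.isOpen_ball (convex_ball (0:ℂ) 1).isPreconnected
    (fun k y _ => (hasDerivAt_pow k y).const_mul (Fa k))
    (fun k y hy => ?_) (Metric.mem_ball_self one_pos)
    (((summable_F (by simp)).of_norm)) (mem_ball_zero_iff.mpr hw)
  · exact h
  · have hy1 : ‖y‖ ≤ 1 := (mem_ball_zero_iff.mp hy).le
    rw [norm_mul, norm_mul, norm_pow, Fa_norm, Complex.norm_natCast]
    have h1 : ‖y‖ ^ (k-1) ≤ 1 := pow_le_one₀ (norm_nonneg _) hy1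
    have h2 : (1 / ((k+1).factorial : ℝ)) * (k:ℝ) ≤ 1 / (k.factorial : ℝ) := by
      rw [div_mul_eq_mul_div, div_le_div_iff₀ (by positivity) (by positivity)]
      have : (k+1).factorial = (k+1) * k.factorial := Nat.factorial_succ k
      rw [this]
      push_cast
      nlinarith [(by exact_mod_cast Nat.factorial_pos k : (0:ℝ) < k.factorial)]
    calc 1 / ((k+1).factorial : ℝ) * ((k:ℝ) * ‖y‖^(k-1))
        = 1 / ((k+1).factorial : ℝ) * (k:ℝ) * ‖y‖^(k-1) := by ring
      _ ≤ 1 / ((k+1).factorial : ℝ) * (k:ℝ) * 1 := by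
          apply mul_le_mul_of_nonneg_left h1 (by positivity)
      _ = 1 / ((k+1).factorial : ℝ) * (k:ℝ) := by ring
      _ ≤ 1 / (k.factorial : ℝ) := h2

lemma summable_u16 : Summable (fun n : ℕ => (4:ℝ) * (1/4)^(2*n+2)) := by
  refine Summable.of_nonneg_of_le (fun n => by positivity) (fun n => ?_)
    ((summable_geometric_of_lt_one (by norm_num) (by norm_num : (1/16:ℝ) < 1)).mul_left 4)
  have : ((1:ℝ)/4)^(2*n+2) ≤ (1/16:ℝ)^n := by
    rw [show 2*n+2 = 2*(n+1) by ring, pow_mul, show ((1:ℝ)/4)^2 = (1/16:ℝ) by norm_num,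
      pow_succ]
    nlinarith [pow_nonneg (by norm_num : (0:ℝ) ≤ 1/16) n]
  nlinarith [pow_nonneg (by norm_num : (0:ℝ) ≤ 1/4) (2*n+2)]

lemma hasDerivAt_GG {w : ℂ} (hw : ‖w‖ < 1) : HasDerivAt GG (HH w) w := by
  have hd : ∀ (n : ℕ) (y : ℂ), HasDerivAt (fun y : ℂ => bc (2*n+2) / ((2*n+2 : ℕ) : ℂ) * y ^ (2*n+2))
      (bc (2*n+2) * y ^ (2*n+1)) y := by
    intro n y
    have h := (hasDerivAt_pow (2*n+2) y).const_mul (bc (2*n+2) / ((2*n+2 : ℕ) : ℂ))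
    have hne : ((2*n+2 : ℕ) : ℂ) ≠ 0 := by exact_mod_cast (by omega : (2*n+2 : ℕ) ≠ 0)
    refine h.congr_deriv (Eq.symm ?_)
    rw [show (2*n+2) - 1 = 2*n+1 from rfl, eq_comm, div_mul_eq_mul_div, div_eq_iff hne]
    ring
  have h := hasDerivAt_tsum_of_isPreconnected
    (u := fun n : ℕ => (4:ℝ) * (1/4)^(2*n+2))
    (g := fun n y => bc (2*n+2) / ((2*n+2 : ℕ) : ℂ) * y ^ (2*n+2))
    (g' := fun n y => bc (2*n+2) * y ^ (2*n+1))
    summable_u16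
    Metric.isOpen_ball (convex_ball (0:ℂ) 1).isPreconnected
    (fun n y _ => hd n y)
    (fun n y hy => ?_) (Metric.mem_ball_self one_pos)
    ?_ (mem_ball_zero_iff.mpr hw)
  · exact h
  · have hy1 : ‖y‖ ≤ 1 := (mem_ball_zero_iff.mp hy).le
    rw [norm_mul, norm_pow]
    calc ‖bc (2*n+2)‖ * ‖y‖^(2*n+1) ≤ (4 * (1/4:ℝ)^(2*n+2)) * 1 :=
          mul_le_mul (bc_norm _) (pow_le_one₀ (norm_nonneg _) hy1) (by positivity) (by positivity)
      _ = 4 * (1/4:ℝ)^(2*n+2) := by ring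
  · apply summable_of_ne_finset_zero (s := ∅)
    intro n _
    simp [zero_pow]

lemma FF_zero : FF 0 = 1 := by
  rw [FF]
  rw [tsum_eq_single 0 (fun k hk => by simp [zero_pow hk])]
  simp [Fa]

lemma GG_zero : GG 0 = 0 := by
  rw [GG]
  convert tsum_zero with n
  simp [zero_pow]

lemma HH_zero : HH 0 = 0 := by
  rw [HH]
  convert tsum_zero with n
  simp [zero_pow]

lemma FD_zero : FD 0 = -(1/2 : ℂ) := by
  rw [FD]
  rw [tsum_eq_single 1 (fun k hk => ?_)]
  · simp [Fa]
    norm_num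
  · match k with
    | 0 => simp
    | (k+2) => simp [zero_pow]

lemma FB {w : ℂ} (hw : ‖w‖ ≤ 1) (hw0 : w ≠ 0) : FF w * BB w = Complex.exp (-w) := by
  have h1 := mulF hw
  have h2 := key_mulB hw
  apply mul_left_cancel₀ hw0
  calc w * (FF w * BB w) = (w * FF w) * BB w := by ring
    _ = (1 - Complex.exp (-w)) * BB w := by rw [h1]
    _ = Complex.exp (-w) * (BB w * (Complex.exp w - 1)) := by
        have hee : Complex.exp (-w) * Complex.exp w = 1 := by
          rw [← Complex.exp_add]; simp
        linear_combination (-(BB w)) * hee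
    _ = Complex.exp (-w) * w := by rw [h2]
    _ = w * Complex.exp (-w) := by ring

lemma deriv_relation {w : ℂ} (hw : ‖w‖ < 1) : FD w = FF w * (-(1/2) + HH w) := by
  by_cases hw0 : w = 0
  · subst hw0
    rw [FD_zero, FF_zero, HH_zero]
    ring
  · apply mul_left_cancel₀ hw0
    have h1 : w * FD w = Complex.exp (-w) - FF w := by
      have := keyF hw.le
      linear_combination this
    rw [h1]
    have h2 : w * (FF w * (-(1/2) + HH w)) = FF w * (-(w/2) + w * HH w) := by ring
    rw [h2, key_H hw.le]
    have h3 := FB hw.le hw0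
    linear_combination -h3

lemma phi_deriv {w : ℂ} (hw1 : ‖w‖ < 1) :
    HasDerivAt (fun w => Complex.log (FF w) - (-w/2 + GG w)) 0 w := by
  have hlog : HasDerivAt (fun w => Complex.log (FF w)) ((FF w)⁻¹ * FD w) w :=
    (Complex.hasDerivAt_log (F_slit hw1)).comp w (hasDerivAt_FF hw1)
  have hlin : HasDerivAt (fun w : ℂ => -w/2 + GG w) (-(1/2) + HH w) w := by
    have h1 : HasDerivAt (fun w : ℂ => -w/2) (-(1/2) : ℂ) w := by
      have := (hasDerivAt_id w).neg.div_const 2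
      refine this.congr_deriv ?_
      norm_num
    exact h1.add (hasDerivAt_GG hw1)
  have h := hlog.sub hlin
  refine h.congr_deriv (Eq.symm ?_)
  rw [deriv_relation hw1]
  field_simp [F_ne_zero hw1]
  ring

lemma phi_const {z : ℂ} (hz1 : ‖z‖ < 1) :
    Complex.log (FF z) - (-z/2 + GG z) = Complex.log (FF 0) - (-(0:ℂ)/2 + GG 0) := by
  set φ : ℂ → ℂ := fun w => Complex.log (FF w) - (-w/2 + GG w) with hφ
  have hder : ∀ w ∈ Metric.ball (0:ℂ) 1, HasDerivAt φ 0 w := fun w hw =>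
    phi_deriv (mem_ball_zero_iff.mp hw)
  have hdiff : DifferentiableOn ℂ φ (Metric.ball (0:ℂ) 1) := fun x hx =>
    ((hder x hx).differentiableAt).differentiableWithinAt
  have hfd : ∀ x ∈ Metric.ball (0:ℂ) 1, fderivWithin ℂ φ (Metric.ball (0:ℂ) 1) x = 0 := by
    intro x hx
    rw [fderivWithin_of_isOpen Metric.isOpen_ball hx, (hder x hx).hasFDerivAt.fderiv]
    ext
    simp
  exact (convex_ball (0:ℂ) 1).is_const_of_fderivWithin_eq_zero hdiff hfd
    (mem_ball_zero_iff.mpr hz1) (mem_ball_zero_iff.mpr (by norm_num))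

end LogAux

open LogAux in
/-- For `|z| < 1`, `log((1 - e^{-z})/z) = -z/2 + Σ_{n≥1} B_{2n}/((2n)·(2n)!) · z^{2n}`,
where `log` is the branch vanishing at `z = 0` (for `z ≠ 0`; at `z = 0` the function is
extended by the value `1`). -/
theorem log_one_sub_exp_neg_div (z : ℂ) (hz : ‖z‖ < 1) (hz0 : z ≠ 0) :
    Complex.log ((1 - Complex.exp (-z)) / z) =
      -z / 2 + ∑' n : ℕ, (bernoulli (2 * (n + 1)) : ℂ) /
        ((2 * (n + 1) : ℂ) * ((2 * (n + 1)).factorial : ℂ)) * z ^ (2 * (n + 1)) := by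
  have hz1 : ‖z‖ < 1 := hz
  have hFz : (1 - Complex.exp (-z)) / z = FF z := by
    rw [div_eq_iff hz0, mul_comm]
    exact (mulF hz1.le).symm
  have hphi := phi_const hz1
  rw [FF_zero, GG_zero, Complex.log_one] at hphi
  have hlog : Complex.log (FF z) = -z/2 + GG z := by
    linear_combination hphi
  rw [hFz, hlog]
  congr 1
  rw [GG]
  apply tsum_congr
  intro n
  rw [bc, div_div]
  have e1 : 2*n+2 = 2*(n+1) := by ring
  rw [e1]
  push_cast
  ring
end

section
/- The configuration space C₂,₀ of two distinct points in the open upper half-plane modulo the action of the group G = {z ↦ az + b : a > 0, b ∈ ℝ} is such that the map (z₁, z₂) ↦ (z₂ - z₁)/(z₂ - conj(z₁)) induces an injection of the quotient C₂,₀ into the open unit disc minus {0}, whose image is the open unit disc minus {0}. -/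
open Complex

private lemma denom_ne {z₁ z₂ : ℂ} (h1 : 0 < z₁.im) (h2 : 0 < z₂.im) :
    z₂ - (starRingEnd ℂ) z₁ ≠ 0 := by
  intro h
  have := congrArg Complex.im h
  simp [Complex.sub_im, Complex.conj_im] at this
  linarith

/-- The configuration space of two distinct points in the open upper half-plane modulo
`z ↦ az + b` (`a > 0`, `b ∈ ℝ`): the invariant `(z₂-z₁)/(z₂-conj(z₁))` takes values in the
punctured open unit disc; two pairs have the same invariant iff they are in the same orbit;
and every value in the punctured open unit disc is attained.  Hence the invariant induces a
bijection (homeomorphism) from the quotient onto the open unit disc minus `{0}`. -/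
theorem configuration_space_C20_punctured_disc :
    (∀ z₁ z₂ : ℂ, 0 < z₁.im → 0 < z₂.im → z₁ ≠ z₂ →
      ‖(z₂ - z₁) / (z₂ - (starRingEnd ℂ) z₁)‖ < 1 ∧
        (z₂ - z₁) / (z₂ - (starRingEnd ℂ) z₁) ≠ 0) ∧
    (∀ z₁ z₂ w₁ w₂ : ℂ, 0 < z₁.im → 0 < z₂.im → z₁ ≠ z₂ →
      0 < w₁.im → 0 < w₂.im → w₁ ≠ w₂ →
      ((z₂ - z₁) / (z₂ - (starRingEnd ℂ) z₁) = (w₂ - w₁) / (w₂ - (starRingEnd ℂ) w₁) ↔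
        ∃ (a b : ℝ), 0 < a ∧ w₁ = (a : ℂ) * z₁ + (b : ℂ) ∧ w₂ = (a : ℂ) * z₂ + (b : ℂ))) ∧
    (∀ w : ℂ, ‖w‖ < 1 → w ≠ 0 →
      ∃ z₁ z₂ : ℂ, 0 < z₁.im ∧ 0 < z₂.im ∧ z₁ ≠ z₂ ∧
        (z₂ - z₁) / (z₂ - (starRingEnd ℂ) z₁) = w) := by
  refine ⟨?_, ?_, ?_⟩
  · intro z₁ z₂ h1 h2 hne
    have hd := denom_ne h1 h2
    constructor
    · rw [norm_div, div_lt_one (norm_pos_iff.mpr hd)]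
      have hsq : Complex.normSq (z₂ - z₁) < Complex.normSq (z₂ - (starRingEnd ℂ) z₁) := by
        simp only [Complex.normSq_apply, Complex.sub_re, Complex.sub_im, Complex.conj_re,
          Complex.conj_im]
        nlinarith [mul_pos h1 h2]
      have := Real.sqrt_lt_sqrt (Complex.normSq_nonneg _) hsq
      simpa [Complex.norm_def] using this
    · exact div_ne_zero (sub_ne_zero.mpr hne.symm) hd
  · intro z₁ z₂ w₁ w₂ hz1 hz2 hzne hw1 hw2 hwne
    have hdz := denom_ne hz1 hz2
    have hdw := denom_ne hw1 hw2
    constructor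
    · intro heq
      refine ⟨w₁.im / z₁.im, w₁.re - (w₁.im / z₁.im) * z₁.re, by positivity, ?_, ?_⟩
      · apply Complex.ext <;>
          simp [Complex.add_re, Complex.add_im, Complex.mul_re, Complex.mul_im,
            Complex.ofReal_re, Complex.ofReal_im] <;>
          field_simp
      · set a : ℝ := w₁.im / z₁.im with ha
        set b : ℝ := w₁.re - a * z₁.re with hb
        have ha0 : (a : ℂ) ≠ 0 := by
          have : (0:ℝ) < a := by positivity
          exact_mod_cast this.ne'
        have hw1eq : w₁ = (a : ℂ) * z₁ + (b : ℂ) := by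
          apply Complex.ext <;>
            simp [Complex.add_re, Complex.add_im, Complex.mul_re, Complex.mul_im,
              Complex.ofReal_re, Complex.ofReal_im, hb] <;>
            rw [ha, div_mul_cancel₀ _ hz1.ne']
        have hconj : (starRingEnd ℂ) w₁ = (a : ℂ) * (starRingEnd ℂ) z₁ + (b : ℂ) := by
          rw [hw1eq]; simp
        set u : ℂ := (a : ℂ) * z₂ + (b : ℂ) with hu
        have hud : u - (starRingEnd ℂ) w₁ = (a : ℂ) * (z₂ - (starRingEnd ℂ) z₁) := by
          rw [hconj, hu]; ring
        have hun : u - w₁ = (a : ℂ) * (z₂ - z₁) := by rw [hw1eq, hu]; ring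
        have hudne : u - (starRingEnd ℂ) w₁ ≠ 0 := by
          rw [hud]; exact mul_ne_zero ha0 hdz
        have heq2 : (u - w₁) / (u - (starRingEnd ℂ) w₁) =
            (w₂ - w₁) / (w₂ - (starRingEnd ℂ) w₁) := by
          rw [hun, hud, mul_div_mul_left _ _ ha0]; exact heq
        have key : (u - w₁) * (w₂ - (starRingEnd ℂ) w₁) =
            (w₂ - w₁) * (u - (starRingEnd ℂ) w₁) :=
          (div_eq_div_iff hudne hdw).mp heq2
        have hc : (w₁ - (starRingEnd ℂ) w₁) * (w₂ - u) = 0 := by linear_combination -key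
        have hne : w₁ - (starRingEnd ℂ) w₁ ≠ 0 := by
          intro h
          have := congrArg Complex.im h
          simp [Complex.sub_im, Complex.conj_im] at this
          linarith
        have := (mul_eq_zero.mp hc).resolve_left hne
        exact sub_eq_zero.mp this
    · rintro ⟨a, b, hapos, hw1e, hw2e⟩
      have ha0 : (a : ℂ) ≠ 0 := by exact_mod_cast hapos.ne'
      have hconj : (starRingEnd ℂ) w₁ = (a : ℂ) * (starRingEnd ℂ) z₁ + (b : ℂ) := by
        rw [hw1e]; simp
      rw [hconj, hw1e, hw2e]
      rw [show (a:ℂ) * z₂ + b - ((a:ℂ) * z₁ + b) = (a:ℂ) * (z₂ - z₁) by ring,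
        show (a:ℂ) * z₂ + b - ((a:ℂ) * (starRingEnd ℂ) z₁ + b)
            = (a:ℂ) * (z₂ - (starRingEnd ℂ) z₁) by ring,
        mul_div_mul_left _ _ ha0]
  · intro w habs hw0
    have hd : (1 : ℂ) - w ≠ 0 := by
      intro h
      have : w = 1 := by linear_combination -h
      rw [this] at habs; simp at habs
    have hnsq : Complex.normSq w < 1 := by
      have := Complex.sq_norm w
      nlinarith [norm_nonneg w]
    refine ⟨Complex.I, Complex.I * (1 + w) / (1 - w), by simp, ?_, ?_, ?_⟩
    · rw [Complex.div_im]
      simp only [Complex.mul_re, Complex.mul_im, Complex.I_re, Complex.I_im,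
        Complex.add_re, Complex.add_im, Complex.one_re, Complex.one_im,
        Complex.sub_re, Complex.sub_im]
      have h1 : 0 < Complex.normSq (1 - w) := Complex.normSq_pos.mpr hd
      rw [Complex.normSq_apply] at hnsq
      simp only [Complex.normSq_apply, Complex.sub_re, Complex.sub_im,
        Complex.one_re, Complex.one_im] at h1 ⊢
      rw [div_sub_div _ _ h1.ne' h1.ne', div_pos_iff]
      left
      refine ⟨by nlinarith, by nlinarith⟩
    · intro h
      apply hw0
      rw [eq_div_iff hd] at h
      have h2 : Complex.I * ((2:ℂ) * w) = 0 := by linear_combination -h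
      have := (mul_eq_zero.mp h2).resolve_left Complex.I_ne_zero
      simpa using this
    · rw [Complex.conj_I]
      have hden : Complex.I * (1 + w) / (1 - w) - -Complex.I ≠ 0 := by
        rw [div_sub' hd]
        apply div_ne_zero _ hd
        rw [show Complex.I * (1 + w) - (1 - w) * -Complex.I = Complex.I * 2 by ring]
        simp [Complex.I_ne_zero]
      rw [div_eq_iff hden]
      field_simp
      ring
end
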